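/- arXiv:2405.16243 — 7 statements merged into one kernel-verified Lean document; each statement's English description precedes it below -/
import Mathlib

section
/- For a relation R on a finite set X, there exists p ∈ ℕ⁺ such that Per(R) = {q ∈ ℕ⁺ : ∃ N, R^(q+n) = R^n for all n ≥ N} equals the set of positive multiples of p. -/
open Set Pointwise

variable {X : Type*}

def relComp (S R : Set (X × X)) : Set (X × X) :=
  {p | ∃ y, (p.1, y) ∈ R ∧ (y, p.2) ∈ S}

def relPow (R : Set (X × X)) : ℕ → Set (X × X)
  | 0 => {p | p.1 = p.2}
  | n + 1 => relComp R (relPow R n)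

def relPer (R : Set (X × X)) : Set ℕ :=
  {q | 0 < q ∧ ∃ N, ∀ n ≥ N, relPow R (q + n) = relPow R n}

def relRecurrent (R : Set (X × X)) (x : X) : Prop :=
  ∃ n, 1 ≤ n ∧ (x, x) ∈ relPow R n

lemma relPow_shift (R : Set (X × X)) {m m' : ℕ} (h : relPow R m = relPow R m') :
    ∀ k, relPow R (m + k) = relPow R (m' + k) := by
  intro k
  induction k with
  | zero => simpa using h
  | succ k ih =>
    show relComp R (relPow R (m + k)) = relComp R (relPow R (m' + k))
    rw [ih]

lemma relPer_nonempty [Finite X] (R : Set (X × X)) : (relPer R).Nonempty := by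
  obtain ⟨m, m', hne, heq⟩ := Finite.exists_ne_map_eq_of_infinite (relPow R)
  wlog hlt : m < m' generalizing m m'
  · exact this m' m hne.symm heq.symm (by omega)
  refine ⟨m' - m, by omega, m, fun n hn => ?_⟩
  have h := relPow_shift R heq (n - m)
  have e1 : m' - m + n = m' + (n - m) := by omega
  have e2 : m + (n - m) = n := by omega
  rw [e1, ← h, e2]

lemma relPer_add {R : Set (X × X)} {a b : ℕ} (ha : a ∈ relPer R) (hb : b ∈ relPer R) :
    a + b ∈ relPer R := by
  obtain ⟨hapos, Na, hNa⟩ := ha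
  obtain ⟨hbpos, Nb, hNb⟩ := hb
  refine ⟨by omega, max Na Nb, fun n hn => ?_⟩
  have h1 : relPow R (a + (b + n)) = relPow R (b + n) := hNa _ (by omega)
  have h2 : relPow R (b + n) = relPow R n := hNb _ (by omega)
  rw [add_assoc, h1, h2]

lemma relPer_sub {R : Set (X × X)} {a b : ℕ} (hab : a < b) (ha : a ∈ relPer R)
    (hb : b ∈ relPer R) : b - a ∈ relPer R := by
  obtain ⟨hapos, Na, hNa⟩ := ha
  obtain ⟨hbpos, Nb, hNb⟩ := hb
  refine ⟨by omega, Na + Nb + a, fun n hn => ?_⟩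
  have e1 : b - a + n = b + (n - a) := by omega
  have e2 : n = a + (n - a) := by omega
  rw [e1, hNb _ (by omega)]
  conv_rhs => rw [e2, hNa _ (by omega)]

theorem stmt2 [Finite X] (R : Set (X × X)) :
    ∃ p : ℕ, 0 < p ∧ relPer R = {q | 0 < q ∧ p ∣ q} := by
  classical
  have hex : ∃ n, n ∈ relPer R := relPer_nonempty R
  set p := Nat.find hex with hp
  have hpmem : p ∈ relPer R := Nat.find_spec hex
  have hppos : 0 < p := hpmem.1
  have hmul : ∀ k, 0 < k → p * k ∈ relPer R := by
    intro k hk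
    induction k with
    | zero => omega
    | succ k ih =>
      rcases Nat.eq_zero_or_pos k with h | h
      · simpa [h] using hpmem
      · have := relPer_add (ih h) hpmem
        simpa [Nat.mul_succ] using this
  refine ⟨p, hppos, ?_⟩
  ext q
  simp only [Set.mem_setOf_eq]
  constructor
  · intro hq
    refine ⟨hq.1, ?_⟩
    by_contra hdvd
    have hr : 0 < q % p := Nat.pos_of_ne_zero (fun h => hdvd (Nat.dvd_of_mod_eq_zero h))
    have hrlt : q % p < p := Nat.mod_lt _ hppos
    have hmd := Nat.mod_add_div q p
    set r := q % p with hr'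
    set d := q / p with hd'
    clear_value r d
    have hqd : 0 < d := by
      rcases Nat.eq_zero_or_pos d with h | h
      · subst h; simp at hmd; exact absurd hq (Nat.find_min hex (by rw [← hp]; omega))
      · exact h
    have hmem : p * d ∈ relPer R := hmul _ hqd
    have hlt : p * d < q := by
      have : 0 < p * d := Nat.mul_pos hppos hqd
      omega
    have hsub : q - p * d ∈ relPer R := relPer_sub hlt hmem hq
    have heq : q - p * d = r := by omega
    rw [heq] at hsub
    exact absurd hsub (Nat.find_min hex (hp ▸ hrlt))
  · rintro ⟨hqpos, k, rfl⟩
    have hk : 0 < k := by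
      rcases Nat.eq_zero_or_pos k with h | h
      · simp [h] at hqpos
      · exact h
    exact hmul k hk
end

section
/- If q is an eventual period of R (R^q ∘ R^q = R^q) and p is the period of R (the generator of Per(R)), then R^(q+p) = R^q. -/
open Set Pointwise

variable {X : Type*}

lemma relComp_assoc (A B C : Set (X × X)) :
    relComp A (relComp B C) = relComp (relComp A B) C := by
  ext ⟨a, b⟩
  constructor
  · rintro ⟨y, ⟨z, hz1, hz2⟩, hy⟩
    exact ⟨z, hz1, y, hz2, hy⟩
  · rintro ⟨z, hz, y, hy1, hy2⟩
    exact ⟨y, ⟨z, hz, hy1⟩, hy2⟩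

lemma relPow_add (R : Set (X × X)) (m n : ℕ) :
    relPow R (m + n) = relComp (relPow R n) (relPow R m) := by
  induction n with
  | zero =>
    ext ⟨a, b⟩
    constructor
    · intro h; exact ⟨b, h, rfl⟩
    · rintro ⟨y, hy, h⟩
      have hyb : y = b := h
      exact hyb ▸ hy
  | succ n ih =>
    show relComp R (relPow R (m + n)) = _
    rw [ih, relComp_assoc]
    rfl

lemma relPow_idem (R : Set (X × X)) (q : ℕ)
    (hev : relPow R (q + q) = relPow R q) (m : ℕ) :
    relPow R (q + m * q) = relPow R q := by
  induction m with
  | zero => simp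
  | succ m ih =>
    have : q + (m + 1) * q = (q + m * q) + q := by ring
    rw [this, relPow_add, ih, ← relPow_add, hev]

theorem stmt4 [Finite X] (R : Set (X × X)) (q p : ℕ) (hq : 0 < q)
    (hev : relPow R (q + q) = relPow R q)
    (hp : 0 < p) (hPer : relPer R = {q' | 0 < q' ∧ p ∣ q'}) :
    relPow R (q + p) = relPow R q := by
  have hpPer : p ∈ relPer R := by rw [hPer]; exact ⟨hp, dvd_refl p⟩
  obtain ⟨-, N, hN⟩ := hpPer
  set M := q + N * q with hMdef
  have hM : relPow R M = relPow R q := relPow_idem R q hev N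
  have hMN : M ≥ N := by
    have : N * q ≥ N * 1 := Nat.mul_le_mul_left N hq
    omega
  have h1 := hN M hMN
  calc relPow R (q + p) = relComp (relPow R p) (relPow R q) := relPow_add R q p
    _ = relComp (relPow R p) (relPow R M) := by rw [hM]
    _ = relPow R (M + p) := (relPow_add R M p).symm
    _ = relPow R q := by rw [Nat.add_comm, h1, hM]
end

section
/- Let R be a relation on a finite set with eventual period q and period p. Then p is the least common multiple of {p'(x) : x recurrent}, where p'(x) is the generator of Per(x) = {n ≥ 1 : x ∈ R^(q+n)(x)}. -/
open Set Pointwise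

variable {X : Type*}

lemma mem_relPow_add {R : Set (X × X)} : ∀ (a b : ℕ) (x z : X),
    (x, z) ∈ relPow R (a + b) ↔ ∃ y, (x, y) ∈ relPow R b ∧ (y, z) ∈ relPow R a := by
  intro a
  induction a with
  | zero =>
    intro b x z
    rw [Nat.zero_add]
    exact ⟨fun h => ⟨z, h, rfl⟩, fun ⟨y, h1, h2⟩ => (show y = z from h2) ▸ h1⟩
  | succ a ih =>
    intro b x z
    rw [Nat.succ_add]
    constructor
    · rintro ⟨w, hw1, hw2⟩
      obtain ⟨y, hy1, hy2⟩ := (ih b x w).1 hw1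
      exact ⟨y, hy1, ⟨w, hy2, hw2⟩⟩
    · rintro ⟨y, hy1, ⟨w, hw1, hw2⟩⟩
      exact ⟨w, (ih b x w).2 ⟨y, hy1, hw1⟩, hw2⟩

/-- Extract a path from membership in a relation power. -/
lemma relPow_path {R : Set (X × X)} : ∀ (n : ℕ) (a b : X), (a, b) ∈ relPow R n →
    ∃ f : ℕ → X, f 0 = a ∧ f n = b ∧ ∀ i < n, (f i, f (i + 1)) ∈ R := by
  intro n
  induction n with
  | zero =>
    intro a b h
    exact ⟨fun _ => a, rfl, (show a = b from h) ▸ rfl, by simp⟩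
  | succ n ih =>
    rintro a b ⟨y, hy1, hy2⟩
    obtain ⟨g, hg0, hgn, hgs⟩ := ih a y hy1
    refine ⟨fun i => if i ≤ n then g i else b, by simp [hg0], by simp, ?_⟩
    intro i hi
    rcases lt_or_eq_of_le (Nat.lt_succ_iff.mp hi) with h | h
    · have h1 : i ≤ n := le_of_lt h
      have h2 : i + 1 ≤ n := h
      simp only [if_pos h1, if_pos h2]
      exact hgs i h
    · subst h
      simp only [le_refl, if_pos, Nat.lt_irrefl]
      rw [if_neg (by omega)]
      exact hgn ▸ hy2

/-- Segments of a path are in relation powers. -/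
lemma path_seg {R : Set (X × X)} {f : ℕ → X} {n : ℕ}
    (hf : ∀ i < n, (f i, f (i + 1)) ∈ R) :
    ∀ d i, i + d ≤ n → (f i, f (i + d)) ∈ relPow R d := by
  intro d
  induction d with
  | zero => intro i _; exact rfl
  | succ d ih =>
    intro i h
    exact ⟨f (i + d), ih i (by omega), hf (i + d) (by omega)⟩

/-- Pump a cycle. -/
lemma relPow_cycle {R : Set (X × X)} {x : X} {j : ℕ} (h : (x, x) ∈ relPow R j) :
    ∀ t, (x, x) ∈ relPow R (t * j) := by
  intro t
  induction t with
  | zero => rw [Nat.zero_mul]; exact rfl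
  | succ t ih =>
    have : (x, x) ∈ relPow R (j + t * j) := (mem_relPow_add j (t * j) x x).2 ⟨x, ih, h⟩
    simpa [Nat.succ_mul, Nat.add_comm] using this

section PerQ

variable {R : Set (X × X)} {q : ℕ}

lemma periodic_q (_hq : 0 < q) (hev : relPow R (q + q) = relPow R q) :
    ∀ n, q ≤ n → relPow R (n + q) = relPow R n := by
  intro n hn
  obtain ⟨k, rfl⟩ := Nat.exists_eq_add_of_le hn
  ext ⟨x, z⟩
  have h1 : q + k + q = k + (q + q) := by omega
  have h2 : q + k = k + q := by omega
  rw [h1, h2]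
  rw [mem_relPow_add, mem_relPow_add, hev]

lemma periodic_q_mul (hq : 0 < q) (hev : relPow R (q + q) = relPow R q) :
    ∀ t n, q ≤ n → relPow R (n + t * q) = relPow R n := by
  intro t
  induction t with
  | zero => simp
  | succ t ih =>
    intro n hn
    have h1 : n + (t + 1) * q = (n + t * q) + q := by ring
    rw [h1, periodic_q hq hev _ (by omega), ih n hn]

end PerQ

theorem stmt10 [Finite X] (R : Set (X × X)) (q p : ℕ) (hq : 0 < q)
    (hev : relPow R (q + q) = relPow R q)
    (hp : 0 < p) (hPer : relPer R = {q' | 0 < q' ∧ p ∣ q'})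
    (p' : X → ℕ)
    (hgen : ∀ x, relRecurrent R x → 0 < p' x ∧
      {n | 0 < n ∧ (x, x) ∈ relPow R (q + n)} = {n | 0 < n ∧ p' x ∣ n}) :
    (∀ x, relRecurrent R x → p' x ∣ p) ∧
    (∀ m : ℕ, (∀ x, relRecurrent R x → p' x ∣ m) → p ∣ m) := by
  have := Fintype.ofFinite X
  constructor
  · -- part 1
    intro x hx
    obtain ⟨hp'pos, hset⟩ := hgen x hx
    have hpPer : p ∈ relPer R := by rw [hPer]; exact ⟨hp, dvd_refl p⟩
    obtain ⟨N, hN⟩ := hpPer.2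
    set n := p' x * (N + 1) with hn
    have hnpos : 0 < n := by positivity
    have hdvd : p' x ∣ n := ⟨N + 1, rfl⟩
    have h1 : (x, x) ∈ relPow R (q + n) := by
      have : n ∈ {n | 0 < n ∧ p' x ∣ n} := ⟨hnpos, hdvd⟩
      rw [← hset] at this
      exact this.2
    have hnge : N + 1 ≤ n := Nat.le_mul_of_pos_left _ hp'pos
    have h2 : relPow R (p + (q + n)) = relPow R (q + n) := hN (q + n) (by omega)
    have h3 : (x, x) ∈ relPow R (q + (n + p)) := by
      rw [show q + (n + p) = p + (q + n) by omega, h2]; exact h1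
    have h4 : (n + p) ∈ {n | 0 < n ∧ p' x ∣ n} := by rw [← hset]; exact ⟨by omega, h3⟩
    exact (Nat.dvd_add_right hdvd).mp h4.2
  · -- part 2
    intro m hm
    rcases Nat.eq_zero_or_pos m with rfl | hmpos
    · exact dvd_zero p
    set c := Fintype.card X with hc
    -- forward inclusion
    have F : ∀ n, q ≤ n → c ≤ n → relPow R n ⊆ relPow R (n + m) := by
      rintro n hn1 hn2 ⟨a, b⟩ hab
      obtain ⟨f, hf0, hfn, hfs⟩ := relPow_path n a b hab
      obtain ⟨i, j, hij, hfij⟩ := Fintype.exists_ne_map_eq_of_card_lt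
        (fun i : Fin (n + 1) => f i) (by simp; omega)
      have hne : (i : ℕ) ≠ (j : ℕ) := fun h => hij (Fin.ext h)
      wlog hlt : (i : ℕ) < (j : ℕ) generalizing i j
      · exact this j i hij.symm hfij.symm hne.symm (by omega)
      set x := f i with hxdef
      have hax : (a, x) ∈ relPow R i := by
        have := path_seg hfs i 0 (by omega)
        simpa [hf0] using this
      have hxx : (x, x) ∈ relPow R ((j : ℕ) - i) := by
        have := path_seg hfs ((j : ℕ) - i) i (by omega)
        rw [show (i : ℕ) + ((j : ℕ) - i) = j by omega] at this
        rw [← hfij] at this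
        exact this
      have hxb : (x, b) ∈ relPow R (n - j) := by
        have := path_seg hfs (n - j) j (by omega)
        rw [show (j : ℕ) + (n - j) = n by omega, hfn, ← hfij] at this
        exact this
      have hrec : relRecurrent R x := ⟨(j : ℕ) - i, by omega, hxx⟩
      obtain ⟨hp'pos, hset⟩ := hgen x hrec
      have hcyc : (x, x) ∈ relPow R (q + m) := by
        have : m ∈ {n | 0 < n ∧ p' x ∣ n} := ⟨hmpos, hm x hrec⟩
        rw [← hset] at this
        exact this.2
      -- compose: a →i x →(j-i) x →(q+m) x →(n-j) b
      have s1 : (a, x) ∈ relPow R (((j : ℕ) - i) + i) :=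
        (mem_relPow_add _ _ _ _).2 ⟨x, hax, hxx⟩
      have s2 : (a, x) ∈ relPow R ((q + m) + (((j : ℕ) - i) + i)) :=
        (mem_relPow_add _ _ _ _).2 ⟨x, s1, hcyc⟩
      have s3 : (a, b) ∈ relPow R ((n - j) + ((q + m) + (((j : ℕ) - i) + i))) :=
        (mem_relPow_add _ _ _ _).2 ⟨x, s2, hxb⟩
      have harith : (n - (j:ℕ)) + ((q + m) + (((j : ℕ) - i) + i)) = (n + m) + q := by omega
      rw [harith] at s3
      rwa [periodic_q hq hev (n + m) (by omega)] at s3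
    -- chain forward
    have Fchain : ∀ t n, q ≤ n → c ≤ n → relPow R n ⊆ relPow R (n + t * m) := by
      intro t
      induction t with
      | zero => simp
      | succ t ih =>
        intro n hn1 hn2
        have h1 : relPow R (n + t * m) ⊆ relPow R ((n + t * m) + m) :=
          F (n + t * m) (by omega) (by omega)
        have h2 : (n + t * m) + m = n + (t + 1) * m := by ring
        rw [h2] at h1
        exact (ih n hn1 hn2).trans h1
    have hmPer : m ∈ relPer R := by
      refine ⟨hmpos, max q c, fun n hn => ?_⟩
      have hn1 : q ≤ n := le_trans (le_max_left _ _) hn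
      have hn2 : c ≤ n := le_trans (le_max_right _ _) hn
      apply Set.Subset.antisymm
      · -- R^{m+n} ⊆ R^n
        rw [Nat.add_comm m n]
        have h1 : relPow R (n + m) ⊆ relPow R ((n + m) + (q - 1) * m) :=
          Fchain (q - 1) (n + m) (by omega) (by omega)
        have h2 : (n + m) + (q - 1) * m = n + m * q := by
          have : (n + m) + (q - 1) * m = n + q * m := by
            have hle : m ≤ q * m := Nat.le_mul_of_pos_left m hq
            rw [Nat.sub_one_mul]; omega
          rw [this, Nat.mul_comm]
        rw [h2, periodic_q_mul hq hev m n hn1] at h1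
        exact h1
      · rw [Nat.add_comm m n]
        exact F n hn1 hn2
    rw [hPer] at hmPer
    exact hmPer.2
end

section
/- If x and y are recurrent points with x ↔_R y (i.e. x →_R y and y →_R x, where u →_R v means v ∈ R^n(u) for some n ≥ 1), then p'(x) = p'(y), where p'(z) generates Per(z) = {n ≥ 1 : z ∈ R^(q+n)(z)} for an eventual period q. -/
open Set Pointwise

variable {X : Type*}

lemma relPow_comp {R : Set (X × X)} {a b c : X} {m n : ℕ}
    (h1 : (a, b) ∈ relPow R m) (h2 : (b, c) ∈ relPow R n) :
    (a, c) ∈ relPow R (m + n) := by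
  induction n generalizing c with
  | zero =>
    have : b = c := h2
    simpa [this] using h1
  | succ n ih =>
    obtain ⟨z, hz1, hz2⟩ := h2
    exact ⟨z, ih hz1, hz2⟩

theorem stmt11 [Finite X] (R : Set (X × X)) (q : ℕ) (hq : 0 < q)
    (hev : relPow R (q + q) = relPow R q)
    (x y : X) (hx : relRecurrent R x) (hy : relRecurrent R y)
    (hxy : ∃ n, 1 ≤ n ∧ (x, y) ∈ relPow R n) (hyx : ∃ n, 1 ≤ n ∧ (y, x) ∈ relPow R n)
    (px py : ℕ) (hpx : 0 < px) (hpy : 0 < py)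
    (hgx : {n | 0 < n ∧ (x, x) ∈ relPow R (q + n)} = {n | 0 < n ∧ px ∣ n})
    (hgy : {n | 0 < n ∧ (y, y) ∈ relPow R (q + n)} = {n | 0 < n ∧ py ∣ n}) :
    px = py := by
  obtain ⟨a, ha1, ha⟩ := hxy
  obtain ⟨b, hb1, hb⟩ := hyx
  -- (y,y) ∈ relPow R (q + k*py) for k ≥ 1
  have hyk : ∀ k : ℕ, 0 < k → (y, y) ∈ relPow R (q + k * py) := by
    intro k hk
    have : k * py ∈ {n | 0 < n ∧ py ∣ n} := ⟨Nat.mul_pos hk hpy, dvd_mul_left py k⟩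
    rw [← hgy] at this
    exact this.2
  have hxk : ∀ k : ℕ, 0 < k → (x, x) ∈ relPow R (q + k * px) := by
    intro k hk
    have : k * px ∈ {n | 0 < n ∧ px ∣ n} := ⟨Nat.mul_pos hk hpx, dvd_mul_left px k⟩
    rw [← hgx] at this
    exact this.2
  have hdx : ∀ k : ℕ, 0 < k → px ∣ a + k * py + b := by
    intro k hk
    have h1 : (x, y) ∈ relPow R a := ha
    have h2 := relPow_comp h1 (hyk k hk)
    have h3 := relPow_comp h2 hb
    have hmem : a + k * py + b ∈ {n | 0 < n ∧ (x, x) ∈ relPow R (q + n)} := by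
      refine ⟨by omega, ?_⟩
      have : a + (q + k * py) + b = q + (a + k * py + b) := by ring
      rwa [this] at h3
    rw [hgx] at hmem
    exact hmem.2
  have hdy : ∀ k : ℕ, 0 < k → py ∣ b + k * px + a := by
    intro k hk
    have h2 := relPow_comp hb (hxk k hk)
    have h3 := relPow_comp h2 ha
    have hmem : b + k * px + a ∈ {n | 0 < n ∧ (y, y) ∈ relPow R (q + n)} := by
      refine ⟨by omega, ?_⟩
      have : b + (q + k * px) + a = q + (b + k * px + a) := by ring
      rwa [this] at h3
    rw [hgy] at hmem
    exact hmem.2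
  have d1 : px ∣ py := by
    have h1 := hdx 1 one_pos
    have h2 := hdx 2 two_pos
    have h := Nat.dvd_sub h2 h1
    have : a + 2 * py + b - (a + 1 * py + b) = py := by omega
    rwa [this] at h
  have d2 : py ∣ px := by
    have h1 := hdy 1 one_pos
    have h2 := hdy 2 two_pos
    have h := Nat.dvd_sub h2 h1
    have : b + 2 * px + a - (b + 1 * px + a) = px := by omega
    rwa [this] at h
  exact Nat.dvd_antisymm d1 d2
end

section
/- Let R be a relation on a finite set X with eventual period q, and suppose y ∈ R^(q+i+j)(x) for some i,j ≥ 0. Then there exists a recurrent point z with z ∈ R^(q+i)(x) and y ∈ R^(q+j)(z). -/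
open Set Pointwise

variable {X : Type*}

lemma relPow_add_mem (R : Set (X × X)) (a b : ℕ) (x y : X) :
    (x, y) ∈ relPow R (a + b) ↔ ∃ z, (x, z) ∈ relPow R a ∧ (z, y) ∈ relPow R b := by
  induction b generalizing y with
  | zero =>
    constructor
    · intro h; exact ⟨y, h, rfl⟩
    · rintro ⟨z, h, hz⟩
      have : z = y := hz
      subst this; exact h
  | succ b ih =>
    constructor
    · rintro ⟨w, hw, hwy⟩
      obtain ⟨z, hz1, hz2⟩ := (ih w).1 hw
      exact ⟨z, hz1, ⟨w, hz2, hwy⟩⟩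
    · rintro ⟨z, hz, ⟨w, hwz, hwy⟩⟩
      exact ⟨w, (ih w).2 ⟨z, hz, hwz⟩, hwy⟩

lemma relPow_collapse (R : Set (X × X)) (q : ℕ)
    (hev : relPow R (q + q) = relPow R q) (m : ℕ) :
    relPow R (q + q + m) = relPow R (q + m) := by
  ext ⟨x, y⟩
  rw [relPow_add_mem, relPow_add_mem, hev]

lemma relPow_collapse_mul (R : Set (X × X)) (q : ℕ)
    (hev : relPow R (q + q) = relPow R q) (k m : ℕ) :
    relPow R (k * q + (q + m)) = relPow R (q + m) := by
  induction k with
  | zero => simp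
  | succ k ih =>
    have h1 : (k + 1) * q + (q + m) = q + q + (k * q + m) := by ring
    have h2 : q + (k * q + m) = k * q + (q + m) := by ring
    rw [h1, relPow_collapse R q hev, h2, ih]

lemma relPow_chain (R : Set (X × X)) (q m : ℕ) (y : X) :
    ∀ k x', (x', y) ∈ relPow R (k * q + m) →
      ∃ f : ℕ → X, f 0 = x' ∧ (∀ t < k, (f t, f (t + 1)) ∈ relPow R q) ∧
        (f k, y) ∈ relPow R m := by
  intro k
  induction k with
  | zero => intro x' h; exact ⟨fun _ => x', rfl, by intro t ht; omega, by simpa using h⟩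
  | succ k ih =>
    intro x' h
    have h' : (x', y) ∈ relPow R (q + (k * q + m)) := by
      have : (k + 1) * q + m = q + (k * q + m) := by ring
      rwa [this] at h
    obtain ⟨z, hz1, hz2⟩ := (relPow_add_mem R q (k * q + m) x' y).1 h'
    obtain ⟨f, hf0, hfstep, hfend⟩ := ih z hz2
    refine ⟨fun t => if t = 0 then x' else f (t - 1), by simp, ?_, ?_⟩
    · intro t ht
      rcases Nat.eq_zero_or_pos t with rfl | hpos
      · simpa [hf0] using hz1
      · have h1 : ¬ t = 0 := by omega
        have h2 : ¬ t + 1 = 0 := by omega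
        simp only [h1, h2, if_false]
        have : t + 1 - 1 = (t - 1) + 1 := by omega
        rw [this]
        exact hfstep (t - 1) (by omega)
    · simpa using hfend

lemma relPow_chain_trans (R : Set (X × X)) (q : ℕ) (f : ℕ → X) (k : ℕ)
    (hf : ∀ t < k, (f t, f (t + 1)) ∈ relPow R q) :
    ∀ s t, s ≤ t → t ≤ k → (f s, f t) ∈ relPow R ((t - s) * q) := by
  intro s t hst htk
  induction t with
  | zero =>
    have : s = 0 := by omega
    subst this
    simp [relPow]
  | succ t ih =>
    rcases Nat.lt_or_ge s (t + 1) with hlt | hge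
    · have hst' : s ≤ t := by omega
      have h1 := ih hst' (by omega)
      have h2 := hf t (by omega)
      have : (t + 1 - s) * q = (t - s) * q + q := by
        have : t + 1 - s = (t - s) + 1 := by omega
        rw [this]; ring
      rw [this]
      exact (relPow_add_mem R _ _ _ _).2 ⟨f t, h1, h2⟩
    · have : s = t + 1 := by omega
      subst this
      simp [relPow]

theorem stmt12 [Finite X] (R : Set (X × X)) (q : ℕ) (hq : 0 < q)
    (hev : relPow R (q + q) = relPow R q)
    (i j : ℕ) (x y : X) (hxy : (x, y) ∈ relPow R (q + i + j)) :
    ∃ z, relRecurrent R z ∧ (x, z) ∈ relPow R (q + i) ∧ (z, y) ∈ relPow R (q + j) := by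
  have := Fintype.ofFinite X
  set n := Fintype.card X with hn
  -- lift hxy to a long power
  have hlong : (x, y) ∈ relPow R ((q + i) + ((n + 1) * q + (q + j))) := by
    have e1 : (q + i) + ((n + 1) * q + (q + j)) = (n + 2) * q + (q + (i + j)) := by ring
    have e2 : q + i + j = q + (i + j) := by ring
    rw [e1, relPow_collapse_mul R q hev, ← e2]
    exact hxy
  obtain ⟨x0, hx0, hx0y⟩ := (relPow_add_mem R _ _ _ _).1 hlong
  obtain ⟨f, hf0, hfstep, hfend⟩ := relPow_chain R q (q + j) y (n + 1) x0 hx0y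
  -- pigeonhole on f over Fin (n+2)
  have hcard : Fintype.card X < Fintype.card (Fin (n + 2)) := by simp [hn]
  obtain ⟨a, b, hab, heq⟩ := Fintype.exists_ne_map_eq_of_card_lt
    (fun t : Fin (n + 2) => f t) hcard
  -- wlog a < b
  obtain ⟨s, t, hst, htle, hsle, hfs⟩ :
      ∃ s t : ℕ, s < t ∧ t ≤ n + 1 ∧ s ≤ n + 1 ∧ f s = f t := by
    rcases lt_or_gt_of_ne hab with h | h
    · exact ⟨a, b, h, by omega, by omega, heq⟩
    · exact ⟨b, a, h, by omega, by omega, heq.symm⟩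
  refine ⟨f s, ?_, ?_, ?_⟩
  · refine ⟨(t - s) * q, ?_, ?_⟩
    · have : 1 ≤ t - s := by omega
      calc 1 ≤ 1 * q := by omega
        _ ≤ (t - s) * q := Nat.mul_le_mul_right q this
    · have := relPow_chain_trans R q f (n + 1) hfstep s t (by omega) htle
      rwa [← hfs] at this
  · have h1 : (f 0, f s) ∈ relPow R (s * q) := by
      simpa using relPow_chain_trans R q f (n + 1) hfstep 0 s (by omega) hsle
    rw [hf0] at h1
    have h2 : (x, f s) ∈ relPow R ((q + i) + s * q) :=
      (relPow_add_mem R _ _ _ _).2 ⟨x0, hx0, h1⟩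
    have e : (q + i) + s * q = s * q + (q + i) := by ring
    rw [e, relPow_collapse_mul R q hev] at h2
    exact h2
  · have h1 : (f t, f (n + 1)) ∈ relPow R ((n + 1 - t) * q) :=
      relPow_chain_trans R q f (n + 1) hfstep t (n + 1) htle (le_refl _)
    have h2 : (f s, y) ∈ relPow R ((n + 1 - t) * q + (q + j)) := by
      refine (relPow_add_mem R _ _ _ _).2 ⟨f (n + 1), ?_, hfend⟩
      rwa [hfs]
    rwa [relPow_collapse_mul R q hev] at h2
end

section
/- Let ξ be a cocycle for a partial order R_≥ on X̄ with values in nonempty subsets of ℤ/pℤ, and define R̄_ξ on X̄ × ℤ/pℤ by (b,s) ∈ R̄_ξ^i(a,t) iff (a,b) ∈ R_≥ and s−t−i ∈ ξ(a,b). Then R̄_ξ^i ∘ R̄_ξ^j = R̄_ξ^(i+j) for all i,j ≥ 1, R̄_ξ^(p+i) = R̄_ξ^i, and every point of X̄ × ℤ/pℤ is recurrent for R̄_ξ. -/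
open Set Pointwise

variable {X : Type*}

def relXi {Xbar : Type*} (p : ℕ) (Rge : Set (Xbar × Xbar))
    (ξ : Xbar → Xbar → Set (ZMod p)) (i : ℕ) :
    Set ((Xbar × ZMod p) × (Xbar × ZMod p)) :=
  {z | (z.1.1, z.2.1) ∈ Rge ∧ z.2.2 - z.1.2 - (i : ZMod p) ∈ ξ z.1.1 z.2.1}

theorem stmt17 {Xbar : Type*} [Finite Xbar] (p : ℕ) (hp : 0 < p)
    (Rge : Set (Xbar × Xbar))
    (hrefl : ∀ a, (a, a) ∈ Rge)
    (htrans : ∀ a b c, (a, b) ∈ Rge → (b, c) ∈ Rge → (a, c) ∈ Rge)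
    (hanti : ∀ a b, (a, b) ∈ Rge → (b, a) ∈ Rge → a = b)
    (ξ : Xbar → Xbar → Set (ZMod p))
    (hne : ∀ a b, (a, b) ∈ Rge → (ξ a b).Nonempty)
    (hco : ∀ a b c, (a, b) ∈ Rge → (b, c) ∈ Rge → ξ a b + ξ b c ⊆ ξ a c) :
    (∀ i j, 1 ≤ i → 1 ≤ j →
      relComp (relXi p Rge ξ i) (relXi p Rge ξ j) = relXi p Rge ξ (i + j)) ∧
    (∀ i, 1 ≤ i → relXi p Rge ξ (p + i) = relXi p Rge ξ i) ∧
    (∀ z : Xbar × ZMod p, relRecurrent (relXi p Rge ξ 1) z) := by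
  haveI : NeZero p := ⟨hp.ne'⟩
  -- key: 0 ∈ ξ a a
  have hzero : ∀ a, (0 : ZMod p) ∈ ξ a a := by
    intro a
    obtain ⟨e, he⟩ := hne a a (hrefl a)
    have hmul : ∀ k : ℕ, (k + 1) • e ∈ ξ a a := by
      intro k
      induction k with
      | zero => simpa using he
      | succ k ih =>
        have : e + (k + 1) • e ∈ ξ a a :=
          hco a a a (hrefl a) (hrefl a) (add_mem_add he ih)
        have heq : (k + 1 + 1) • e = e + (k + 1) • e := by
          rw [add_nsmul, one_nsmul, add_comm]
        rwa [heq]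
    have hord : 0 < addOrderOf e := addOrderOf_pos e
    have h0 : addOrderOf e • e = 0 := addOrderOf_nsmul_eq_zero e
    obtain ⟨m, hm⟩ := Nat.exists_eq_add_of_lt hord
    have := hmul m
    rw [zero_add] at hm
    rwa [← hm, h0] at this
  -- part 1
  have hcomp : ∀ i j : ℕ, 1 ≤ i → 1 ≤ j →
      relComp (relXi p Rge ξ i) (relXi p Rge ξ j) = relXi p Rge ξ (i + j) := by
    intro i j hi hj
    ext ⟨⟨a, t⟩, ⟨c, u⟩⟩
    constructor
    · rintro ⟨⟨b, s⟩, ⟨hab, hs⟩, ⟨hbc, hu⟩⟩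
      refine ⟨htrans a b c hab hbc, ?_⟩
      have := hco a b c hab hbc (add_mem_add hs hu)
      have heq : s - t - (j : ZMod p) + (u - s - (i : ZMod p))
          = u - t - ((i + j : ℕ) : ZMod p) := by
        push_cast; ring
      rwa [heq] at this
    · rintro ⟨hac, hu⟩
      refine ⟨(a, t + (j : ZMod p)), ⟨hrefl a, ?_⟩, ⟨hac, ?_⟩⟩
      · simpa using hzero a
      · have heq : u - (t + (j : ZMod p)) - (i : ZMod p)
            = u - t - ((i + j : ℕ) : ZMod p) := by push_cast; ring
        rwa [heq]
  refine ⟨hcomp, ?_, ?_⟩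
  · intro i _
    have : ((p + i : ℕ) : ZMod p) = (i : ZMod p) := by
      push_cast [ZMod.natCast_self]; ring
    unfold relXi
    rw [this]
  · intro z
    have hpow : ∀ n : ℕ, 1 ≤ n → relPow (relXi p Rge ξ 1) n = relXi p Rge ξ n := by
      intro n hn
      induction n with
      | zero => omega
      | succ n ih =>
        rcases Nat.eq_or_lt_of_le hn with h | h
        · simp only [← h]
          show relComp _ (relPow _ 0) = _
          ext ⟨⟨a, t⟩, ⟨c, u⟩⟩
          constructor
          · rintro ⟨⟨b, s⟩, hbs, hmem⟩
            have : (b, s) = (a, t) := hbs.symm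
            rwa [this] at hmem
          · intro h
            exact ⟨(a, t), rfl, h⟩
        · have hn1 : 1 ≤ n := by omega
          show relComp _ (relPow _ n) = _
          rw [ih hn1]
          have := hcomp 1 n le_rfl hn1
          rw [Nat.add_comm] at this
          -- relComp (Xi 1) (Xi n) : careful with order in hcomp
          exact this
    refine ⟨p, hp, ?_⟩
    rw [hpow p hp]
    exact ⟨hrefl z.1, by simpa [ZMod.natCast_self] using hzero z.1⟩
end

section
/- Let (X,R) be a relation in canonical form (every point recurrent, R a bijection on each strongly connected component, and R^(p+1) = R with p minimal), and let f : X → X be the bijection given by restricting R to the strongly connected components. Then f is an isomorphism of (X,R) to itself: (x,y) ∈ R iff (f(x),f(y)) ∈ R; consequently f ∘ R^i = R^i ∘ f = R^(i+1) for all i ≥ 1. -/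
open Set Pointwise

variable {X : Type*}

def relReach (R : Set (X × X)) (x y : X) : Prop :=
  ∃ n, 1 ≤ n ∧ (x, y) ∈ relPow R n

lemma relPow_one_iff (R : Set (X × X)) {x y : X} :
    (x, y) ∈ relPow R 1 ↔ (x, y) ∈ R := by
  constructor
  · rintro ⟨z, hz, hz2⟩
    simp only [relPow, Set.mem_setOf_eq] at hz
    exact hz ▸ hz2
  · intro h; exact ⟨x, rfl, h⟩

lemma relPow_add_s18 (R : Set (X × X)) (m n : ℕ) (x y : X) :
    (x, y) ∈ relPow R (m + n) ↔ ∃ z, (x, z) ∈ relPow R m ∧ (z, y) ∈ relPow R n := by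
  induction n generalizing y with
  | zero =>
    constructor
    · intro h; exact ⟨y, h, rfl⟩
    · rintro ⟨z, hz, h⟩
      simp only [relPow, Set.mem_setOf_eq] at h
      exact h ▸ hz
  | succ k ih =>
    have heq : m + (k + 1) = (m + k) + 1 := by omega
    rw [heq]
    constructor
    · rintro ⟨w, hw, hw2⟩
      obtain ⟨z, hz1, hz2⟩ := (ih w).mp hw
      exact ⟨z, hz1, ⟨w, hz2, hw2⟩⟩
    · rintro ⟨z, hz1, ⟨w, hw, hw2⟩⟩
      exact ⟨w, (ih w).mpr ⟨z, hz1, hw⟩, hw2⟩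

lemma relPow_period (R : Set (X × X)) (p : ℕ)
    (hper : relPow R (p + 1) = relPow R 1) :
    ∀ m, 1 ≤ m → relPow R (m + p) = relPow R m := by
  intro m hm
  induction m, hm using Nat.le_induction with
  | base => rw [Nat.add_comm]; exact hper
  | succ k hk ih =>
    have h1 : k + 1 + p = (k + p) + 1 := by omega
    rw [h1]
    show relComp R (relPow R (k + p)) = relComp R (relPow R k)
    rw [ih]

lemma relPow_period_mul (R : Set (X × X)) (p : ℕ) (hppos : 0 < p)
    (hper : relPow R (p + 1) = relPow R 1) :
    ∀ k, relPow R (p + k * p) = relPow R p := by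
  intro k
  induction k with
  | zero => simp
  | succ j ih =>
    have h1 : p + (j + 1) * p = (p + j * p) + p := by ring
    rw [h1, relPow_period R p hper _ (by omega), ih]

lemma relPow_self_pow (R : Set (X × X)) {x : X} {n : ℕ} (hx : (x, x) ∈ relPow R n) :
    ∀ k, 1 ≤ k → (x, x) ∈ relPow R (k * n) := by
  intro k hk
  induction k, hk using Nat.le_induction with
  | base => simpa using hx
  | succ j hj ih =>
    have h1 : (j + 1) * n = j * n + n := by ring
    rw [h1]
    exact (relPow_add_s18 R _ _ _ _).mpr ⟨x, ih, hx⟩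

theorem stmt18 [Finite X] (R : Set (X × X)) (p : ℕ) (f : X → X)
    (hrec : ∀ x : X, relRecurrent R x)
    (hf : Function.Bijective f)
    (hfR : ∀ x, (x, f x) ∈ R ∧ relReach R (f x) x)
    (hfuniq : ∀ x y, (x, y) ∈ R → relReach R y x → y = f x)
    (hppos : 0 < p)
    (hper : relPow R (p + 1) = relPow R 1)
    (hmin : ∀ p', 0 < p' → relPow R (p' + 1) = relPow R 1 → p ≤ p') :
    (∀ x y, (x, y) ∈ R ↔ (f x, f y) ∈ R) ∧
    (∀ i, 1 ≤ i → ∀ x y,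
      ((x, y) ∈ relPow R i ↔ (x, f y) ∈ relPow R (i + 1)) ∧
      ((f x, y) ∈ relPow R i ↔ (x, y) ∈ relPow R (i + 1))) := by
  -- Every point has a cycle of length exactly p
  have hcyc : ∀ x : X, (x, x) ∈ relPow R p := by
    intro x
    obtain ⟨n, hn1, hn⟩ := hrec x
    have h1 : (x, x) ∈ relPow R (p * n) := relPow_self_pow R hn p hppos
    obtain ⟨m, rfl⟩ : ∃ m, n = m + 1 := ⟨n - 1, by omega⟩
    have h2 : p * (m + 1) = p + m * p := by ring
    rw [h2, relPow_period_mul R p hppos hper] at h1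
    exact h1
  obtain ⟨q, rfl⟩ : ∃ q, p = q + 1 := ⟨p - 1, by omega⟩
  -- f x goes back to x in exactly q = p - 1 steps
  have hback : ∀ x : X, (f x, x) ∈ relPow R q := by
    have haux : ∀ x : X, ∃ z, f z = x ∧ (x, z) ∈ relPow R q := by
      intro x
      obtain ⟨z, hz1, hz2⟩ := hcyc x
      have hreach : relReach R x z := by
        rcases Nat.eq_zero_or_pos q with hq | hq
        · subst hq
          simp only [relPow, Set.mem_setOf_eq] at hz1
          exact hz1 ▸ ⟨1, le_refl 1, by simpa using hcyc x⟩
        · exact ⟨q, hq, hz1⟩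
      have hx : x = f z := hfuniq z x hz2 hreach
      exact ⟨z, hx.symm, hx ▸ hz1⟩
    intro x
    obtain ⟨z, hz1, hz2⟩ := haux (f x)
    have : z = x := hf.1 hz1
    rwa [this] at hz2
  have key : ∀ i, 1 ≤ i → ∀ x y,
      ((x, y) ∈ relPow R i ↔ (x, f y) ∈ relPow R (i + 1)) ∧
      ((f x, y) ∈ relPow R i ↔ (x, y) ∈ relPow R (i + 1)) := by
    intro i hi x y
    constructor
    · constructor
      · intro h
        exact (relPow_add_s18 R i 1 x (f y)).mpr
          ⟨y, h, (relPow_one_iff R).mpr (hfR y).1⟩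
      · intro h
        have h2 : (x, y) ∈ relPow R ((i + 1) + q) :=
          (relPow_add_s18 R (i + 1) q x y).mpr ⟨f y, h, hback y⟩
        have h3 : (i + 1) + q = i + (q + 1) := by omega
        rw [h3, relPow_period R (q + 1) hper i hi] at h2
        exact h2
    · constructor
      · intro h
        have h2 : (x, y) ∈ relPow R (1 + i) :=
          (relPow_add_s18 R 1 i x y).mpr ⟨f x, (relPow_one_iff R).mpr (hfR x).1, h⟩
        rwa [Nat.add_comm] at h2
      · intro h
        have h2 : (f x, y) ∈ relPow R (q + (i + 1)) :=
          (relPow_add_s18 R q (i + 1) (f x) y).mpr ⟨x, hback x, h⟩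
        have h3 : q + (i + 1) = i + (q + 1) := by omega
        rw [h3, relPow_period R (q + 1) hper i hi] at h2
        exact h2
  refine ⟨fun x y => ?_, key⟩
  constructor
  · intro h
    have h1 : (x, y) ∈ relPow R 1 := (relPow_one_iff R).mpr h
    have h2 : (x, f y) ∈ relPow R 2 := ((key 1 le_rfl x y).1).mp h1
    have h3 : (f x, f y) ∈ relPow R 1 := ((key 1 le_rfl x (f y)).2).mpr h2
    exact (relPow_one_iff R).mp h3
  · intro h
    have h1 : (f x, f y) ∈ relPow R 1 := (relPow_one_iff R).mpr h
    have h2 : (x, f y) ∈ relPow R 2 := ((key 1 le_rfl x (f y)).2).mp h1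
    have h3 : (x, y) ∈ relPow R 1 := ((key 1 le_rfl x y).1).mpr h2
    exact (relPow_one_iff R).mp h3
end
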